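/- arXiv:2411.15454 — 3 statements merged into one kernel-verified Lean document; each statement's English description precedes it below -/
import Mathlib

section
/- Let A be an n×n real symmetric matrix, let m be a positive integer, and let z_1,…,z_m be i.i.d. standard Gaussian random vectors in ℝ^n (each with i.i.d. N(0,1) coordinates). Then the Gaussian trace estimator tr_m^G(A) := (1/m)·Σ_{j=1}^m z_jᵀ A z_j satisfies E[tr_m^G(A)] = tr(A) and Var[tr_m^G(A)] = (2/m)·‖A‖_F², where ‖A‖_F is the Frobenius norm of A. -/
/-!
Stacking the vectors `z_j` gives a standard Gaussian vector `x` indexed by `Fin m × Fin n`, and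
the estimator is the quadratic form `(1/m) xᵀ (I_m ⊗ A) x`. For a standard Gaussian vector `x`
and any matrix `B`, `E[xᵀ B x] = tr B`; by Isserlis' theorem
`cov(x_a x_b, x_c x_d) = δ_ac δ_bd + δ_ad δ_bc`, so `Var[xᵀ B x] = 2 ∑ B_ab²` when `B` is
symmetric. Isserlis' theorem reduces, by independence, to the moments `E x = 0`, `E x² = 1` and
`E x⁴ = 3`, the last being the fourth derivative at `0` of the moment generating function
`exp (t² / 2)`.
-/

open MeasureTheory ProbabilityTheory

/-- The Gaussian trace estimator `tr_m^G(A) = (1/m) ∑_j z_jᵀ A z_j`. -/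
noncomputable def traceEst {n : ℕ} (m : ℕ) (A : Matrix (Fin n) (Fin n) ℝ)
    {Ω : Type*} (z : Fin m → Fin n → Ω → ℝ) (ω : Ω) : ℝ :=
  (1 / (m : ℝ)) * ∑ j : Fin m, ∑ i : Fin n, ∑ k : Fin n, z j i ω * A i k * z j k ω

open Real
open scoped Kronecker

lemma hasDerivAt_mul_exp_sq_div_two {p : ℝ → ℝ} {p' t : ℝ} (hp : HasDerivAt p p' t) :
    HasDerivAt (fun t => p t * rexp (t ^ 2 / 2)) ((p' + t * p t) * rexp (t ^ 2 / 2)) t := by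
  have h : HasDerivAt (fun t : ℝ => t ^ 2 / 2) t t := by
    simpa using (hasDerivAt_pow 2 t).div_const 2
  exact (hp.mul h.exp).congr_deriv (by ring)

lemma iteratedDeriv_four_exp_sq_div_two :
    iteratedDeriv 4 (fun t : ℝ => rexp (t ^ 2 / 2)) 0 = 3 := by
  have d1 : deriv (fun t : ℝ => rexp (t ^ 2 / 2)) = fun t => t * rexp (t ^ 2 / 2) := by
    funext t
    simpa using (hasDerivAt_mul_exp_sq_div_two (hasDerivAt_const t (1 : ℝ))).deriv
  have d2 : deriv (fun t : ℝ => t * rexp (t ^ 2 / 2)) =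
      fun t => (1 + t ^ 2) * rexp (t ^ 2 / 2) := by
    funext t
    rw [(hasDerivAt_mul_exp_sq_div_two (hasDerivAt_id' t)).deriv]
    ring
  have d3 : deriv (fun t : ℝ => (1 + t ^ 2) * rexp (t ^ 2 / 2)) =
      fun t => (3 * t + t ^ 3) * rexp (t ^ 2 / 2) := by
    funext t
    rw [(hasDerivAt_mul_exp_sq_div_two ((hasDerivAt_pow 2 t).const_add 1)).deriv]
    ring
  have d4 : deriv (fun t : ℝ => (3 * t + t ^ 3) * rexp (t ^ 2 / 2)) 0 = 3 := by
    rw [(hasDerivAt_mul_exp_sq_div_two (p := fun t => 3 * t + t ^ 3)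
      (((hasDerivAt_id' (0 : ℝ)).const_mul 3).fun_add (hasDerivAt_pow 3 0))).deriv]
    norm_num
  simp only [iteratedDeriv_succ', iteratedDeriv_zero, d1, d2, d3, d4]

lemma integral_sq_gaussianReal : ∫ x, x ^ 2 ∂gaussianReal 0 1 = 1 := by
  rw [← variance_of_integral_eq_zero aemeasurable_id' integral_id_gaussianReal,
    variance_fun_id_gaussianReal, NNReal.coe_one]

lemma integral_pow_four_gaussianReal : ∫ x, x ^ 4 ∂gaussianReal 0 1 = 3 := by
  have h := iteratedDeriv_mgf_zero (X := id) (μ := gaussianReal 0 1)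
    (by simp [integrableExpSet_id_gaussianReal]) 4
  simp only [mgf_id_gaussianReal, zero_mul, zero_add, NNReal.coe_one, one_mul,
    iteratedDeriv_four_exp_sq_div_two] at h
  simpa using h.symm

section HasLaw

variable {Ω : Type*} [MeasurableSpace Ω] {P : Measure Ω} {Y : Ω → ℝ}

lemma ProbabilityTheory.HasLaw.memLp_of_gaussianReal {μ : ℝ} {v : NNReal}
    (hY : HasLaw Y (gaussianReal μ v) P) {p : ENNReal} (hp : p ≠ ⊤) : MemLp Y p P :=
  (hY.map_eq ▸ memLp_id_gaussianReal' p hp).comp_of_map hY.aemeasurable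

lemma ProbabilityTheory.HasLaw.integral_pow {μ : Measure ℝ} (hY : HasLaw Y μ P) (k : ℕ) :
    ∫ ω, Y ω ^ k ∂P = ∫ x, x ^ k ∂μ :=
  hY.integral_comp (f := fun x => x ^ k) (by fun_prop)

end HasLaw

structure IsIIDStdGaussian {Ω ι : Type*} [MeasurableSpace Ω] (X : ι → Ω → ℝ) (P : Measure Ω) :
    Prop where
  indep : iIndepFun X P
  hasLaw : ∀ i, HasLaw (X i) (gaussianReal 0 1) P

namespace IsIIDStdGaussian

variable {Ω ι : Type*} [MeasurableSpace Ω] {P : Measure Ω} {X : ι → Ω → ℝ}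

lemma memLp_mul (h : IsIIDStdGaussian X P) (a b : ι) :
    MemLp (fun ω => X a ω * X b ω) 2 P :=
  haveI : ENNReal.HolderTriple 4 4 2 := ⟨by
    rw [← two_mul, show (4 : ENNReal) = 2 * 2 by norm_num, ENNReal.mul_inv (by simp) (by simp),
      ← mul_assoc, ENNReal.mul_inv_cancel (by simp) (by simp), one_mul]⟩
  ((h.hasLaw b).memLp_of_gaussianReal (p := 4) (by simp)).mul'
    ((h.hasLaw a).memLp_of_gaussianReal (p := 4) (by simp))

lemma integral_eq_zero (h : IsIIDStdGaussian X P) (a : ι) : ∫ ω, X a ω ∂P = 0 :=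
  (h.hasLaw a).integral_eq.trans integral_id_gaussianReal

section Isserlis

variable [DecidableEq ι]

lemma integral_mul (h : IsIIDStdGaussian X P) (a b : ι) :
    ∫ ω, X a ω * X b ω ∂P = if a = b then 1 else 0 := by
  rcases eq_or_ne a b with rfl | hab
  · simpa [sq] using ((h.hasLaw a).integral_pow 2).trans integral_sq_gaussianReal
  · rw [if_neg hab, (h.indep.indepFun hab).integral_fun_mul_eq_mul_integral
      (h.hasLaw a).aemeasurable.aestronglyMeasurable (h.hasLaw b).aemeasurable.aestronglyMeasurable,
      h.integral_eq_zero a, zero_mul]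

lemma integral_mul_mul_mul_eq_zero (h : IsIIDStdGaussian X P) {a b c d : ι} (hab : a ≠ b)
    (hac : a ≠ c) (had : a ≠ d) : ∫ ω, X a ω * (X b ω * (X c ω * X d ω)) ∂P = 0 := by
  have hX : ∀ i, AEMeasurable (X i) P := fun i => (h.hasLaw i).aemeasurable
  have hind : IndepFun (X a) (fun ω => X b ω * (X c ω * X d ω)) P :=
    (h.indep.indepFun_finset₀ {a} {b, c, d} (by simp [hab, hac, had]) hX).comp
      (φ := fun v : ({a} : Finset ι) → ℝ => v ⟨a, by simp⟩)
      (ψ := fun v : ({b, c, d} : Finset ι) → ℝ =>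
        v ⟨b, by simp⟩ * (v ⟨c, by simp⟩ * v ⟨d, by simp⟩))
      (by fun_prop) (by fun_prop)
  rw [hind.integral_fun_mul_eq_mul_integral (hX a).aestronglyMeasurable (by fun_prop),
    h.integral_eq_zero, zero_mul]

lemma integral_sq_mul_sq (h : IsIIDStdGaussian X P) {a b : ι} (hab : a ≠ b) :
    ∫ ω, X a ω * X a ω * (X b ω * X b ω) ∂P = 1 := by
  have hX : ∀ i, AEMeasurable (X i) P := fun i => (h.hasLaw i).aemeasurable
  have hind : IndepFun (fun ω => X a ω * X a ω) (fun ω => X b ω * X b ω) P :=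
    (h.indep.indepFun hab).comp (φ := fun x => x * x) (ψ := fun x => x * x) (by fun_prop)
      (by fun_prop)
  rw [hind.integral_fun_mul_eq_mul_integral (by fun_prop) (by fun_prop), h.integral_mul,
    h.integral_mul, if_pos rfl, if_pos rfl, one_mul]

-- An index occurring only once makes both sides vanish; otherwise the indices pair up.
lemma integral_mul_mul_mul (h : IsIIDStdGaussian X P) (a b c d : ι) :
    ∫ ω, X a ω * X b ω * (X c ω * X d ω) ∂P =
      (if a = b then 1 else 0) * (if c = d then 1 else 0) +
        (if a = c then 1 else 0) * (if b = d then 1 else 0) +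
          (if a = d then 1 else 0) * (if b = c then 1 else 0) := by
  rcases eq_or_ne a b with rfl | hab
  · rcases eq_or_ne c d with rfl | hcd
    · rcases eq_or_ne a c with rfl | hac
      · simp only [if_true]
        convert ((h.hasLaw a).integral_pow 4).trans integral_pow_four_gaussianReal using 3 with ω
        · ring
        · norm_num
      · simp [hac, h.integral_sq_mul_sq hac]
    · rcases eq_or_ne c a with rfl | hca
      · convert h.integral_mul_mul_mul_eq_zero hcd.symm hcd.symm hcd.symm using 3 with ω
        · ring
        · simp [hcd]
      · convert h.integral_mul_mul_mul_eq_zero hca hca hcd using 3 with ω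
        · ring
        · simp [hcd, hca.symm]
  · rcases eq_or_ne a c with rfl | hac
    · rcases eq_or_ne b d with rfl | hbd
      · convert h.integral_sq_mul_sq hab using 3 with ω
        · ring
        · simp [hab]
      · convert h.integral_mul_mul_mul_eq_zero hab.symm hab.symm hbd using 3 with ω
        · ring
        · simp [hab, hab.symm, hbd]
    · rcases eq_or_ne a d with rfl | had
      · rcases eq_or_ne b c with rfl | hbc
        · convert h.integral_sq_mul_sq hab using 3 with ω
          · ring
          · simp [hab]
        · convert h.integral_mul_mul_mul_eq_zero hab.symm hbc hab.symm using 3 with ω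
          · ring
          · simp [hab, hac, hbc]
      · convert h.integral_mul_mul_mul_eq_zero hab hac had using 3 with ω
        · ring
        · simp [hab, hac, had]

lemma covariance_mul_mul (h : IsIIDStdGaussian X P) (a b c d : ι) :
    cov[fun ω => X a ω * X b ω, fun ω => X c ω * X d ω; P] =
      (if a = c then 1 else 0) * (if b = d then 1 else 0) +
        (if a = d then 1 else 0) * (if b = c then 1 else 0) := by
  have := h.indep.isProbabilityMeasure
  rw [covariance_eq_sub (h.memLp_mul a b) (h.memLp_mul c d)]
  simp only [Pi.mul_apply]
  rw [h.integral_mul_mul_mul, h.integral_mul, h.integral_mul]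
  ring

end Isserlis

variable [Fintype ι]

lemma memLp_quadForm (h : IsIIDStdGaussian X P) (B : Matrix ι ι ℝ) :
    MemLp (fun ω => ∑ a, ∑ b, B a b * (X a ω * X b ω)) 2 P :=
  memLp_finsetSum _ fun a _ => memLp_finsetSum _ fun b _ => (h.memLp_mul a b).const_mul (B a b)

lemma integral_quadForm (h : IsIIDStdGaussian X P) (B : Matrix ι ι ℝ) :
    ∫ ω, ∑ a, ∑ b, B a b * (X a ω * X b ω) ∂P = B.trace := by
  classical
  have := h.indep.isProbabilityMeasure
  have hint : ∀ a b, Integrable (fun ω => B a b * (X a ω * X b ω)) P := fun a b =>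
    ((h.memLp_mul a b).integrable one_le_two).const_mul _
  rw [integral_finsetSum _ fun a _ => integrable_finsetSum _ fun b _ => hint a b]
  simp [integral_finsetSum _ fun b _ => hint _ b, integral_const_mul, h.integral_mul,
    Matrix.trace]

lemma variance_quadForm (h : IsIIDStdGaussian X P) {B : Matrix ι ι ℝ} (hB : B.IsSymm) :
    Var[fun ω => ∑ a, ∑ b, B a b * (X a ω * X b ω); P] = 2 * ∑ a, ∑ b, B a b ^ 2 := by
  classical
  have := h.indep.isProbabilityMeasure
  have hL2 : ∀ a b, MemLp (fun ω => B a b * (X a ω * X b ω)) 2 P := fun a b =>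
    (h.memLp_mul a b).const_mul _
  rw [← covariance_self (h.memLp_quadForm B).aemeasurable,
    covariance_fun_sum_fun_sum (fun a => memLp_finsetSum _ fun b _ => hL2 a b)
      (fun a => memLp_finsetSum _ fun b _ => hL2 a b)]
  simp only [covariance_fun_sum_fun_sum (hL2 _) (hL2 _), covariance_const_mul_left,
    covariance_const_mul_right, h.covariance_mul_mul]
  simp [mul_add, Finset.sum_add_distrib, hB.apply, sq, two_mul]

end IsIIDStdGaussian

namespace Matrix

variable {l n α : Type*}

lemma IsSymm.kronecker [Mul α] {A : Matrix l l α} {B : Matrix n n α} (hA : A.IsSymm)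
    (hB : B.IsSymm) : (A ⊗ₖ B).IsSymm := by
  rw [IsSymm, ← kroneckerMap_transpose, hA.eq, hB.eq]

variable [Fintype l] [Fintype n] [CommSemiring α]

lemma sum_sq_kronecker (A : Matrix l l α) (B : Matrix n n α) :
    ∑ p, ∑ q, (A ⊗ₖ B) p q ^ 2 = (∑ i, ∑ j, A i j ^ 2) * ∑ k, ∑ k', B k k' ^ 2 := by
  simp [Fintype.sum_prod_type, mul_pow, Finset.sum_mul_sum]

lemma sum_sq_one [DecidableEq l] : ∑ i, ∑ j, (1 : Matrix l l α) i j ^ 2 = Fintype.card l := by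
  simp [one_apply]

end Matrix

lemma traceEst_eq_quadForm {n m : ℕ} (A : Matrix (Fin n) (Fin n) ℝ) {Ω : Type*}
    (z : Fin m → Fin n → Ω → ℝ) :
    traceEst m A z = fun ω => 1 / (m : ℝ) *
      ∑ p, ∑ q, ((1 : Matrix (Fin m) (Fin m) ℝ) ⊗ₖ A) p q * (z p.1 p.2 ω * z q.1 q.2 ω) := by
  funext ω
  simp only [traceEst, Fintype.sum_prod_type, Matrix.kronecker_apply, Matrix.one_apply, ite_mul,
    one_mul, zero_mul, Finset.sum_ite_irrel, Finset.sum_const_zero, Finset.sum_ite_eq,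
    Finset.mem_univ, if_true, mul_comm (z _ _ ω) (A _ _), mul_assoc]

theorem stmt0_general {n m : ℕ} (hm : 0 < m) (A : Matrix (Fin n) (Fin n) ℝ) (hA : A.IsSymm)
    {Ω : Type*} [MeasurableSpace Ω] (P : Measure Ω)
    (z : Fin m → Fin n → Ω → ℝ) (hmeas : ∀ j i, Measurable (z j i))
    (hindep : iIndepFun (m := fun _ : Fin m × Fin n => (inferInstance : MeasurableSpace ℝ))
      (fun p ω => z p.1 p.2 ω) P)
    (hdist : ∀ j i, Measure.map (z j i) P = gaussianReal 0 1) :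
    (∫ ω, traceEst m A z ω ∂P) = A.trace ∧
      variance (traceEst m A z) P = (2 / (m : ℝ)) * ∑ i, ∑ k, (A i k) ^ 2 := by
  have h : IsIIDStdGaussian (fun (p : Fin m × Fin n) ω => z p.1 p.2 ω) P :=
    ⟨hindep, fun p => ⟨(hmeas p.1 p.2).aemeasurable, hdist p.1 p.2⟩⟩
  have hm' : (m : ℝ) ≠ 0 := Nat.cast_ne_zero.mpr hm.ne'
  rw [traceEst_eq_quadForm, integral_const_mul, h.integral_quadForm, variance_const_mul,
    h.variance_quadForm (Matrix.isSymm_one.kronecker hA), Matrix.trace_kronecker,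
    Matrix.trace_one, Matrix.sum_sq_kronecker, Matrix.sum_sq_one, Fintype.card_fin]
  constructor <;> field_simp

/-- The Gaussian trace estimator is unbiased and has variance `(2/m)‖A‖_F²`. -/
theorem stmt0 {n m : ℕ} (hm : 0 < m) (A : Matrix (Fin n) (Fin n) ℝ) (hA : A.IsSymm)
    {Ω : Type*} [MeasurableSpace Ω] (P : Measure Ω) [IsProbabilityMeasure P]
    (z : Fin m → Fin n → Ω → ℝ) (hmeas : ∀ j i, Measurable (z j i))
    (hindep : iIndepFun (m := fun _ : Fin m × Fin n => (inferInstance : MeasurableSpace ℝ))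
      (fun p ω => z p.1 p.2 ω) P)
    (hdist : ∀ j i, Measure.map (z j i) P = gaussianReal 0 1) :
    (∫ ω, traceEst m A z ω ∂P) = A.trace ∧
      variance (traceEst m A z) P = (2 / (m : ℝ)) * ∑ i, ∑ k, (A i k) ^ 2 :=
  stmt0_general hm A hA P z hmeas hindep hdist
end

section
/- Let μ and λ be nonnegative real vectors (padded with zeros to a common length n) with μ ⪯ λ in the majorization order. Then there exists a finite sequence of nonnegative vectors μ ⪯ η_1 ⪯ η_2 ⪯ … ⪯ η_r = λ such that for each i, the consecutive vectors η_i and η_{i+1} differ in at most two coordinates. -/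
/-- Weak majorization `a ⪯_w b` for nonnegative vectors over possibly different (finite) index
types, with implicit zero padding: every partial sum of entries of `a` over a set of size `k`
is dominated by some partial sum of entries of `b` over a set of size at most `k`. -/
def WeakMaj {ι κ : Type*} [Fintype ι] [Fintype κ] (a : ι → ℝ) (b : κ → ℝ) : Prop :=
  ∀ S : Finset ι, ∃ T : Finset κ, T.card ≤ S.card ∧ ∑ i ∈ S, a i ≤ ∑ j ∈ T, b j

/-- Majorization `a ⪯ b` for nonnegative vectors: weak majorization plus equality of sums. -/
def Maj {ι κ : Type*} [Fintype ι] [Fintype κ] (a : ι → ℝ) (b : κ → ℝ) : Prop :=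
  WeakMaj a b ∧ ∑ i, a i = ∑ j, b j


/-!
Sort `μ` and `λ` into decreasing order by transpositions; each is a majorization step moving
two coordinates. For sorted `μ ⪯ λ` with `μ ≠ λ`, let `k` be the first index with `λ k < μ k`
and `j < k` an index with `μ j < λ j`. Moving `t = min (λ j - μ j) (μ k - λ k)` from `λ j` to
`λ k` yields `λ'` with `λ' ⪯ λ` (mass moves from the larger to the smaller coordinate, since
`λ' k ≤ μ k ≤ μ j ≤ λ' j`) and with the prefix sums of `μ` still below those of `λ'`, while
`λ'` agrees with `μ` in one more coordinate. Only `μ` has to stay sorted, so the induction on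
the number of coordinates where the two vectors differ needs no re-sorting.
-/

open Finset Relation

section Unordered

variable {ι ι' κ κ' : Type*} [Fintype ι] [Fintype ι'] [Fintype κ] [Fintype κ']

theorem Maj.refl (a : ι → ℝ) : Maj a a :=
  ⟨fun S => ⟨S, le_rfl, le_rfl⟩, rfl⟩

theorem Maj.comp_equiv {a : ι → ℝ} {b : κ → ℝ} (h : Maj a b) (σ : ι' ≃ ι) (τ : κ' ≃ κ) :
    Maj (a ∘ σ) (b ∘ τ) := by
  refine ⟨fun S => ?_, ?_⟩
  · obtain ⟨T, hcard, hsum⟩ := h.1 (S.map σ.toEmbedding)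
    refine ⟨T.map τ.symm.toEmbedding, by simpa using hcard, ?_⟩
    simpa [sum_map] using hsum
  · simpa [Equiv.sum_comp] using h.2

theorem maj_add_single_sub_single [DecidableEq ι] (a : ι → ℝ) {p q : ι} {t : ℝ} (ht : 0 ≤ t)
    (hqp : a q ≤ a p) : Maj a (a + Pi.single p t - Pi.single q t) := by
  obtain rfl | hpq := eq_or_ne p q
  · simpa using Maj.refl a
  have hsum : ∀ S : Finset ι, ∑ i ∈ S, (a + Pi.single p t - Pi.single q t : ι → ℝ) i
      = ∑ i ∈ S, a i + (if p ∈ S then t else 0) - (if q ∈ S then t else 0) := fun S => by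
    simp [sum_add_distrib, sum_sub_distrib, sum_pi_single']
  refine ⟨fun S => ?_, by rw [hsum]; simp⟩
  by_cases hswap : q ∈ S ∧ p ∉ S
  · obtain ⟨hq, hp⟩ := hswap
    have hp' : p ∉ S.erase q := fun h => hp (mem_of_mem_erase h)
    refine ⟨insert p (S.erase q), ?_, ?_⟩
    · rw [card_insert_of_notMem hp', card_erase_of_mem hq]
      have := card_pos.mpr ⟨q, hq⟩
      omega
    · rw [hsum, if_pos (mem_insert_self _ _), if_neg (by simp [hpq.symm]), sum_insert hp',
        ← add_sum_erase S a hq]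
      linarith
  · refine ⟨S, le_rfl, ?_⟩
    rw [hsum]
    split_ifs <;> simp_all

theorem ncard_setOf_ne_le_two {α : Type*} {a b : ι → α} {p q : ι}
    (h : ∀ i, i ≠ p → i ≠ q → a i = b i) : {i | a i ≠ b i}.ncard ≤ 2 := by
  have hsub : {i | a i ≠ b i} ⊆ {p, q} := fun i hi => by
    by_contra hpq
    simp only [Set.mem_insert_iff, Set.mem_singleton_iff, not_or] at hpq
    exact hi (h i hpq.1 hpq.2)
  calc {i | a i ≠ b i}.ncard ≤ ({p, q} : Set ι).ncard := Set.ncard_le_ncard hsub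
    _ ≤ ({q} : Set ι).ncard + 1 := Set.ncard_insert_le _ _
    _ = 2 := by rw [Set.ncard_singleton]

def MajStep (a b : ι → ℝ) : Prop :=
  Maj a b ∧ {i | a i ≠ b i}.ncard ≤ 2 ∧ 0 ≤ b

theorem majStep_add_single_sub_single [DecidableEq ι] {a : ι → ℝ} {p q : ι} {t : ℝ}
    (ht : 0 ≤ t) (hqp : a q ≤ a p) (hnonneg : 0 ≤ a + Pi.single p t - Pi.single q t) :
    MajStep a (a + Pi.single p t - Pi.single q t) := by
  refine ⟨maj_add_single_sub_single a ht hqp, ncard_setOf_ne_le_two (p := p) (q := q) ?_,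
    hnonneg⟩
  intro i hip hiq
  simp [hip, hiq]

theorem majStep_comp_swap [DecidableEq ι] {a : ι → ℝ} (ha : 0 ≤ a) (x y : ι) :
    MajStep a (a ∘ Equiv.swap x y) := by
  refine ⟨(Maj.refl a).comp_equiv (Equiv.refl ι) _, ncard_setOf_ne_le_two (p := x) (q := y) ?_,
    fun i => ha (Equiv.swap x y i)⟩
  intro i hix hiy
  simp [Equiv.swap_apply_of_ne_of_ne hix hiy]

theorem card_ne_sub_single_add_single_lt [DecidableEq ι] {a b : ι → ℝ} {j k : ι} (hjk : j ≠ k)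
    {t : ℝ} (ht0 : 0 < t) (htj : t ≤ b j - a j) (htk : t ≤ a k - b k)
    (ht : t = b j - a j ∨ t = a k - b k) :
    #{i | a i ≠ (b - Pi.single j t + Pi.single k t : ι → ℝ) i} < #{i | a i ≠ b i} := by
  apply card_lt_card
  rw [ssubset_iff_of_subset]
  · rcases ht with ht | ht
    · exact ⟨j, by simp; linarith, by simp [hjk, ht]⟩
    · exact ⟨k, by simp; linarith, by simp [hjk.symm, ht]⟩
  · intro i
    simp only [mem_filter, mem_univ, true_and]
    intro hi hab
    rcases eq_or_ne i j with rfl | hij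
    · linarith
    rcases eq_or_ne i k with rfl | hik
    · linarith
    exact hi (by simp [hij, hik, hab])

theorem reflTransGen_majStep_comp_perm [DecidableEq ι] {a : ι → ℝ} (ha : 0 ≤ a)
    (σ : Equiv.Perm ι) : ReflTransGen MajStep a (a ∘ σ) := by
  induction σ using Equiv.Perm.swap_induction_on generalizing a with
  | one => exact .refl
  | swap_mul f x y _ ih =>
    rw [Equiv.Perm.coe_mul, ← Function.comp_assoc]
    exact .head (majStep_comp_swap ha x y) (ih fun i => ha (Equiv.swap x y i))

end Unordered

section Ordered

variable {ι : Type*} [LinearOrder ι] [LocallyFiniteOrderBot ι]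

theorem sum_le_sum_Iic_of_antitone {b : ι → ℝ} (hb : Antitone b) {k : ι} (hk : 0 ≤ b k)
    {T : Finset ι} (hT : #T ≤ #(Iic k)) : ∑ i ∈ T, b i ≤ ∑ i ∈ Iic k, b i := by
  have hcard : #(T \ Iic k) ≤ #(Iic k \ T) := by
    have h1 := card_sdiff_add_card_inter T (Iic k)
    have h2 := card_sdiff_add_card_inter (Iic k) T
    rw [inter_comm] at h2
    omega
  have hout : ∑ i ∈ T \ Iic k, b i ≤ ∑ i ∈ Iic k \ T, b i :=
    calc ∑ i ∈ T \ Iic k, b i ≤ #(T \ Iic k) • b k :=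
          sum_le_card_nsmul _ _ _ fun i hi => hb (by simp_all [le_of_lt])
      _ ≤ #(Iic k \ T) • b k := nsmul_le_nsmul_left hk hcard
      _ ≤ ∑ i ∈ Iic k \ T, b i :=
          card_nsmul_le_sum _ _ _ fun i hi => hb (mem_Iic.mp (mem_sdiff.mp hi).1)
  rw [← sum_inter_add_sum_sdiff T (Iic k), ← sum_inter_add_sum_sdiff (Iic k) T, inter_comm]
  linarith

theorem WeakMaj.sum_Iic_le [Fintype ι] {a b : ι → ℝ} (h : WeakMaj a b) (hb : Antitone b)
    (hb0 : 0 ≤ b) (k : ι) : ∑ i ∈ Iic k, a i ≤ ∑ i ∈ Iic k, b i := by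
  obtain ⟨T, hcard, hsum⟩ := h (Iic k)
  exact hsum.trans (sum_le_sum_Iic_of_antitone hb (hb0 k) hcard)

theorem exists_lt_lt_of_sum_Iic_le [Fintype ι] {a b : ι → ℝ} (hne : a ≠ b)
    (hIic : ∀ k, ∑ i ∈ Iic k, a i ≤ ∑ i ∈ Iic k, b i) (hsum : ∑ i, a i = ∑ i, b i) :
    ∃ j k, j < k ∧ a j < b j ∧ b k < a k ∧ ∀ i < k, a i ≤ b i := by
  have hdrop : ∃ k, b k < a k := by
    by_contra! hle
    have hlt : ∑ i, a i < ∑ i, b i := by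
      obtain ⟨i, hi⟩ := Function.ne_iff.mp hne
      exact sum_lt_sum (fun i _ => hle i) ⟨i, mem_univ _, (hle i).lt_of_ne hi⟩
    linarith
  obtain ⟨k, hk, hmin⟩ := WellFounded.has_min wellFounded_lt {k | b k < a k} hdrop
  have hbelow : ∀ i < k, a i ≤ b i := fun i hi => not_lt.mp fun h => hmin i h hi
  obtain ⟨j, hjk, hj⟩ : ∃ j < k, a j < b j := by
    by_contra! hge
    have hIio : ∑ i ∈ Iio k, a i = ∑ i ∈ Iio k, b i :=
      sum_congr rfl fun i hi => le_antisymm (hbelow i (mem_Iio.mp hi)) (hge i (mem_Iio.mp hi))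
    have := hIic k
    rw [← Iio_insert, sum_insert notMem_Iio_self, sum_insert notMem_Iio_self, hIio] at this
    exact absurd this (not_le.mpr (by linarith [hk.out]))
  exact ⟨j, k, hjk, hj, hk, hbelow⟩

theorem sum_Iic_le_sub_single_add_single {a b : ι → ℝ} {j k : ι} (hjk : j < k)
    (hbelow : ∀ i < k, a i ≤ b i) {t : ℝ} (ht : t ≤ b j - a j)
    (hIic : ∀ m, ∑ i ∈ Iic m, a i ≤ ∑ i ∈ Iic m, b i) (m : ι) :
    ∑ i ∈ Iic m, a i ≤ ∑ i ∈ Iic m, (b - Pi.single j t + Pi.single k t : ι → ℝ) i := by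
  have hsum : ∑ i ∈ Iic m, (b - Pi.single j t + Pi.single k t : ι → ℝ) i
      = ∑ i ∈ Iic m, b i - (if j ≤ m then t else 0) + (if k ≤ m then t else 0) := by
    simp [sum_add_distrib, sum_sub_distrib, sum_pi_single']
  rw [hsum]
  by_cases hkm : k ≤ m
  · simp only [if_pos (hjk.le.trans hkm), if_pos hkm]
    linarith [hIic m]
  by_cases hjm : j ≤ m
  · -- below `k` every term of `b - a` is nonnegative, and the `j`-th one is at least `t`
    have hgap : b j - a j ≤ ∑ i ∈ Iic m, (b i - a i) :=
      single_le_sum (f := fun i => b i - a i)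
        (fun i hi => sub_nonneg.mpr (hbelow i ((mem_Iic.mp hi).trans_lt (not_le.mp hkm))))
        (mem_Iic.mpr hjm)
    simp only [if_pos hjm, if_neg hkm, sum_sub_distrib] at hgap ⊢
    linarith
  · simp only [if_neg hjm, if_neg hkm]
    linarith [hIic m]

theorem reflTransGen_majStep_of_sum_Iic_le [Fintype ι] {a b : ι → ℝ} (ha : Antitone a)
    (ha0 : 0 ≤ a) (hb0 : 0 ≤ b) (hIic : ∀ k, ∑ i ∈ Iic k, a i ≤ ∑ i ∈ Iic k, b i)
    (hsum : ∑ i, a i = ∑ i, b i) : ReflTransGen MajStep a b := by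
  induction hd : #{i | a i ≠ b i} using Nat.strong_induction_on generalizing b with
  | _ d ih =>
  obtain rfl | hne := eq_or_ne a b
  · exact .refl
  obtain ⟨j, k, hjk, hj, hk, hbelow⟩ := exists_lt_lt_of_sum_Iic_le hne hIic hsum
  -- the largest transfer keeping `a ⪯ b'`; it makes `b'` agree with `a` at `j` or at `k`
  set t := min (b j - a j) (a k - b k)
  have ht0 : 0 < t := lt_min (by linarith) (by linarith)
  have htj : t ≤ b j - a j := min_le_left _ _
  have htk : t ≤ a k - b k := min_le_right _ _
  set b' : ι → ℝ := b - Pi.single j t + Pi.single k t with hb'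
  have hb'j : b' j = b j - t := by simp [b', hjk.ne]
  have hb'k : b' k = b k + t := by simp [b', hjk.ne']
  have hb'o : ∀ i, i ≠ j → i ≠ k → b' i = b i := fun i hij hik => by simp [b', hij, hik]
  have hb'0 : 0 ≤ b' := fun i => by
    by_cases hij : i = j
    · subst hij; rw [hb'j]; linarith [ha0 i]
    by_cases hik : i = k
    · subst hik; rw [hb'k]; linarith [hb0 i]
    · rw [hb'o i hij hik]; exact hb0 i
  have hfewer : #{i | a i ≠ b' i} < d :=
    hd ▸ card_ne_sub_single_add_single_lt hjk.ne ht0 htj htk (min_choice _ _)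
  have hb'b : b' + Pi.single j t - Pi.single k t = b := by rw [hb']; abel
  have hstep : MajStep b' b := by
    rw [← hb'b]
    refine majStep_add_single_sub_single ht0.le ?_ (hb'b ▸ hb0)
    rw [hb'j, hb'k]
    linarith [ha hjk.le]
  have hb'sum : ∑ i, a i = ∑ i, b' i := by
    simp [b', sum_add_distrib, sum_sub_distrib, hsum]
  exact (ih _ hfewer hb'0 (sum_Iic_le_sub_single_add_single hjk hbelow htj hIic) hb'sum rfl).tail
    hstep

end Ordered

theorem exists_fin_chain_of_reflTransGen {α : Type*} {r : α → α → Prop} {a b : α}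
    (h : ReflTransGen r a b) :
    ∃ (m : ℕ) (η : Fin (m + 1) → α), η 0 = a ∧ η (Fin.last m) = b ∧
      ∀ s : Fin m, r (η s.castSucc) (η s.succ) := by
  induction h with
  | refl => exact ⟨0, fun _ => a, rfl, rfl, Fin.elim0⟩
  | tail _ hbc ih =>
    obtain ⟨m, η, h0, hlast, hstep⟩ := ih
    refine ⟨m + 1, Fin.snoc η _, ?_, Fin.snoc_last _ _, fun s => ?_⟩
    · rw [← Fin.castSucc_zero, Fin.snoc_castSucc, h0]
    induction s using Fin.lastCases with
    | last => rwa [Fin.succ_last, Fin.snoc_last, Fin.snoc_castSucc, hlast]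
    | cast s => rw [Fin.succ_castSucc, Fin.snoc_castSucc, Fin.snoc_castSucc]; exact hstep s

theorem exists_perm_antitone_comp {n : ℕ} (c : Fin n → ℝ) :
    ∃ σ : Equiv.Perm (Fin n), Antitone (c ∘ σ) :=
  ⟨Tuple.sort (OrderDual.toDual ∘ c), monotone_toDual_comp_iff.mp (Tuple.monotone_sort _)⟩

/-- If `μ ⪯ λ` (nonnegative vectors), there is a finite chain
`μ = η_0 ⪯ η_1 ⪯ … ⪯ η_r = λ` of nonnegative vectors in which consecutive vectors
differ in at most two coordinates. -/
theorem stmt4 {n : ℕ} (μ lam : Fin n → ℝ) (hμ : ∀ i, 0 ≤ μ i) (hlam : ∀ i, 0 ≤ lam i)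
    (h : Maj μ lam) :
    ∃ (r : ℕ) (η : Fin (r + 1) → Fin n → ℝ),
      η 0 = μ ∧ η (Fin.last r) = lam ∧ (∀ s i, 0 ≤ η s i) ∧
      ∀ s : Fin r,
        Maj (η s.castSucc) (η s.succ) ∧
        ({i | η s.castSucc i ≠ η s.succ i} : Set (Fin n)).ncard ≤ 2 := by
  obtain ⟨σ, hσ⟩ := exists_perm_antitone_comp μ
  obtain ⟨τ, hτ⟩ := exists_perm_antitone_comp lam
  have hsorted : Maj (μ ∘ σ) (lam ∘ τ) := h.comp_equiv σ τ
  have hlamτ : 0 ≤ lam ∘ τ := fun i => hlam (τ i)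
  have hsort : ReflTransGen MajStep μ (μ ∘ σ) := reflTransGen_majStep_comp_perm hμ σ
  have htransfer : ReflTransGen MajStep (μ ∘ σ) (lam ∘ τ) :=
    reflTransGen_majStep_of_sum_Iic_le hσ (fun i => hμ (σ i)) hlamτ
      (hsorted.1.sum_Iic_le hτ hlamτ) hsorted.2
  have hunsort : ReflTransGen MajStep (lam ∘ τ) lam := by
    simpa [Function.comp_assoc] using reflTransGen_majStep_comp_perm hlamτ τ.symm
  obtain ⟨r, η, h0, hlast, hstep⟩ :=
    exists_fin_chain_of_reflTransGen ((hsort.trans htransfer).trans hunsort)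
  refine ⟨r, η, h0, hlast, fun s => ?_, fun s => ⟨(hstep s).1, (hstep s).2.1⟩⟩
  induction s using Fin.cases with
  | zero => rw [h0]; exact hμ
  | succ s => exact (hstep s).2.2
end

section
/- Let 0 < λ ≤ φ and set ρ := φ²/λ². Let x ∈ ℝ^n satisfy |x_i| ≤ λ for all i and Σ_i x_i² = φ². Then x ⪯_F w, where w ∈ ℝ^{⌊ρ⌋+1} is the vector whose first ⌊ρ⌋ entries equal λ and whose last entry equals λ·√(ρ − ⌊ρ⌋) (vectors compared after padding with zeros to a common length). -/
/-- The ordering `x ⪯_F w`: `(x⁺)² ⪯_w (w⁺)²`, `(w⁻)² ⪯_w (x⁻)²`, and `∑ x_i² = ∑ w_i²`. -/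
def MajF {ι κ : Type*} [Fintype ι] [Fintype κ] (a : ι → ℝ) (b : κ → ℝ) : Prop :=
  WeakMaj (fun i => max (a i) 0 ^ 2) (fun j => max (b j) 0 ^ 2) ∧
  WeakMaj (fun j => min (b j) 0 ^ 2) (fun i => min (a i) 0 ^ 2) ∧
  ∑ i, a i ^ 2 = ∑ j, b j ^ 2

open Finset

def capVec (c r : ℝ) (m : ℕ) : Fin (m + 1) → ℝ := fun i => if (i : ℕ) < m then c else r

section capVec

variable (c r : ℝ) (m : ℕ)

theorem comp_capVec (f : ℝ → ℝ) : f ∘ capVec c r m = capVec (f c) (f r) m := by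
  funext i
  simp only [Function.comp_apply, capVec, apply_ite f]

theorem sum_capVec : ∑ i, capVec c r m i = m * c + r := by
  simp [capVec, Fin.sum_univ_castSucc]

variable {c r}

theorem capVec_nonneg (hc : 0 ≤ c) (hr : 0 ≤ r) (i : Fin (m + 1)) : 0 ≤ capVec c r m i := by
  unfold capVec
  split_ifs <;> assumption

theorem weakMaj_capVec {ι : Type*} [Fintype ι] {a : ι → ℝ} (ha : ∀ i, 0 ≤ a i)
    (hac : ∀ i, a i ≤ c) (hsum : ∑ i, a i ≤ m * c + r) :
    WeakMaj a (capVec c r m) := by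
  intro S
  by_cases hS : #S ≤ m
  · refine ⟨univ.map (Fin.castLEEmb (hS.trans m.le_succ)), by simp, ?_⟩
    have hfirst : ∀ i : Fin #S, capVec c r m (Fin.castLE (hS.trans m.le_succ) i) = c :=
      fun i => if_pos (i.isLt.trans_le hS)
    calc ∑ i ∈ S, a i ≤ #S • c := sum_le_card_nsmul S a c fun i _ => hac i
      _ = _ := by simp [hfirst]
  · refine ⟨univ, by simpa using (not_le.mp hS), ?_⟩
    calc ∑ i ∈ S, a i ≤ ∑ i, a i := sum_le_univ_sum_of_nonneg ha
      _ ≤ ∑ j, capVec c r m j := hsum.trans_eq (sum_capVec c r m).symm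

end capVec

theorem WeakMaj.of_nonpos {ι κ : Type*} [Fintype ι] [Fintype κ] {a : ι → ℝ} (b : κ → ℝ)
    (ha : ∀ i, a i ≤ 0) : WeakMaj a b :=
  fun S => ⟨∅, by simp, by simpa using sum_nonpos fun i _ => ha i⟩

theorem sq_max_zero_le_sq (t : ℝ) : max t 0 ^ 2 ≤ t ^ 2 := by
  rcases le_total t 0 with h | h <;> simp [h, sq_nonneg]

theorem stmt14_general {n : ℕ} (lam φ : ℝ) (hlam : 0 < lam) (x : Fin n → ℝ)
    (hb : ∀ i, |x i| ≤ lam) (hs : ∑ i, x i ^ 2 = φ ^ 2) :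
    MajF x (fun i : Fin (⌊φ ^ 2 / lam ^ 2⌋₊ + 1) =>
      if (i : ℕ) < ⌊φ ^ 2 / lam ^ 2⌋₊ then lam
      else lam * Real.sqrt (φ ^ 2 / lam ^ 2 - ⌊φ ^ 2 / lam ^ 2⌋₊)) := by
  set ρ : ℝ := φ ^ 2 / lam ^ 2
  set m : ℕ := ⌊ρ⌋₊
  set r : ℝ := lam * Real.sqrt (ρ - m)
  change MajF x (capVec lam r m)
  have hr : 0 ≤ r := by positivity
  have hsq : m * lam ^ 2 + r ^ 2 = φ ^ 2 := by
    rw [mul_pow, Real.sq_sqrt (sub_nonneg.mpr (Nat.floor_le (by positivity)))]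
    have hρ : lam ^ 2 * ρ = φ ^ 2 := mul_div_cancel₀ _ (by positivity)
    linear_combination hρ
  have hx : ∀ i, x i ^ 2 ≤ lam ^ 2 := fun i => sq_le_sq.mpr (by rw [abs_of_pos hlam]; exact hb i)
  refine ⟨?_, WeakMaj.of_nonpos _ fun i => ?_, ?_⟩
  · change WeakMaj _ ((fun t => max t 0 ^ 2) ∘ capVec lam r m)
    rw [comp_capVec, max_eq_left hlam.le, max_eq_left hr]
    refine weakMaj_capVec m (fun i => by positivity)
      (fun i => (sq_max_zero_le_sq _).trans (hx i)) ?_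
    calc ∑ i, max (x i) 0 ^ 2 ≤ ∑ i, x i ^ 2 := sum_le_sum fun i _ => sq_max_zero_le_sq _
      _ = m * lam ^ 2 + r ^ 2 := hs.trans hsq.symm
  · simp [capVec_nonneg m hlam.le hr i]
  · change _ = ∑ j, ((fun t => t ^ 2) ∘ capVec lam r m) j
    rw [comp_capVec, sum_capVec, hs, hsq]

/-- Any vector with entries bounded by `λ` in absolute value and sum of squares `φ²` is
`⪯_F`-majorized by the vector with `⌊ρ⌋` entries equal to `λ` and one entry
`λ√(ρ - ⌊ρ⌋)`, where `ρ = φ²/λ²`. -/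
theorem stmt14 {n : ℕ} (lam φ : ℝ) (hlam : 0 < lam) (hlamφ : lam ≤ φ) (x : Fin n → ℝ)
    (hb : ∀ i, |x i| ≤ lam) (hs : ∑ i, x i ^ 2 = φ ^ 2) :
    MajF x (fun i : Fin (⌊φ ^ 2 / lam ^ 2⌋₊ + 1) =>
      if (i : ℕ) < ⌊φ ^ 2 / lam ^ 2⌋₊ then lam
      else lam * Real.sqrt (φ ^ 2 / lam ^ 2 - ⌊φ ^ 2 / lam ^ 2⌋₊)) :=
  stmt14_general lam φ hlam x hb hs
end
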